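/- Let n ≥ 1, let p_1 < ⋯ < p_n be real numbers, and let a ≥ 0, ε > 0, C ≥ 0. For reals p_1 < ⋯ < p_n and ρ ≤ 0, set m_{AB}(ρ) := min{1, exp(2(p_B − p_A)ρ)}. Then there exist constants C′ ≥ 0 and a′ ≥ 0, depending only on n, the p_A, C, a and ε, such that the following holds for every ρ ≤ 0: if ℓ_1, …, ℓ_n are reals with |ℓ_C − p_C| ≤ C ⟨ρ⟩^a e^{2ερ} for all C, and X, Y are real n×n matrices with |X_{AB} − δ_{AB}| ≤ C ⟨ρ⟩^a e^{2ερ} m_{AB}(ρ) and |Y_{AB} − δ_{AB}| ≤ C ⟨ρ⟩^a e^{2ερ} m_{AB}(ρ) for all A, B, then the matrix 𝒦_{AB} := ∑_{C=1}^{n} ℓ_C X_{AC} Y_{CB} satisfies |𝒦_{AB} − p_B δ_{AB}| ≤ C′ ⟨ρ⟩^{a′} e^{2ερ} m_{AB}(ρ) for all A, B ∈ {1,…,n}. -/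

import Mathlib

/-- The Japanese bracket `⟨x⟩ = (1 + x²)^{1/2}`. -/
noncomputable def jbr (x : ℝ) : ℝ := Real.sqrt (1 + x ^ 2)

/-!
Write `δ` for the identity matrix and `η = C ⟨ρ⟩^a e^{2ερ}`. Telescoping,
`ℓ_D X_{AD} Y_{DB} - p_D δ_{AD} δ_{DB} = (ℓ_D - p_D) X_{AD} Y_{DB} + p_D (X - δ)_{AD} Y_{DB}
+ p_D δ_{AD} (Y - δ)_{DB}`, and each of the three products is bounded by a multiple of
`η (1 + η)² m_{AD}(ρ) m_{DB}(ρ)`, since `|δ_{AB}| ≤ m_{AB}(ρ)`. Submultiplicativity of the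
weights, `m_{AD} m_{DB} ≤ m_{AB}`, which holds because `e^{2(p_D - p_A)ρ} e^{2(p_B - p_D)ρ} =
e^{2(p_B - p_A)ρ}`, turns this into a bound by `m_{AB}(ρ)`. Finally `e^{2ερ} ≤ 1 ≤ ⟨ρ⟩^a`
gives `η (1 + η)² ≤ C (1 + C)² ⟨ρ⟩^{3a} e^{2ερ}`.
-/

section WeightedMatrix

variable {ι : Type*} [DecidableEq ι] {w : ι → ι → ℝ}

theorem abs_kronecker_le (hw₀ : ∀ i j, 0 ≤ w i j) (hw₁ : ∀ i, 1 ≤ w i i) (i j : ι) :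
    |(if i = j then 1 else 0 : ℝ)| ≤ w i j := by
  split_ifs with h
  · subst h; simpa using hw₁ i
  · simpa using hw₀ i j

theorem abs_le_one_add_mul_of_abs_sub_le {x d η m : ℝ} (hx : |x - d| ≤ η * m) (hd : |d| ≤ m) :
    |x| ≤ (1 + η) * m :=
  calc |x| = |(x - d) + d| := by rw [sub_add_cancel]
    _ ≤ |x - d| + |d| := abs_add_le _ _
    _ ≤ (1 + η) * m := by linarith

variable (hw₀ : ∀ i j, 0 ≤ w i j) (hw₁ : ∀ i, 1 ≤ w i i) (hw : ∀ i j k, w i j * w j k ≤ w i k)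
  {p ℓ : ι → ℝ} {X Y : ι → ι → ℝ} {η P : ℝ} (hP : ∀ k, |p k| ≤ P) (hℓ : ∀ k, |ℓ k - p k| ≤ η)
  (hX : ∀ i j, |X i j - if i = j then 1 else 0| ≤ η * w i j)
  (hY : ∀ i j, |Y i j - if i = j then 1 else 0| ≤ η * w i j)
include hw₀ hw₁ hw hP hℓ hX hY

theorem abs_mul_mul_sub_kronecker_le (i k j : ι) :
    |ℓ k * X i k * Y k j - p k * (if i = k then 1 else 0) * (if k = j then 1 else 0)| ≤
      (1 + 2 * P) * (η * (1 + η) ^ 2) * w i j := by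
  have hη : 0 ≤ η := (abs_nonneg _).trans (hℓ k)
  have hP₀ : 0 ≤ P := (abs_nonneg _).trans (hP k)
  have hδ := abs_kronecker_le hw₀ hw₁
  -- in context for the positivity side goals of `gcongr` below
  have hwik := hw₀ i k
  have hXik : |X i k| ≤ (1 + η) * w i k := abs_le_one_add_mul_of_abs_sub_le (hX i k) (hδ i k)
  have hYkj : |Y k j| ≤ (1 + η) * w k j := abs_le_one_add_mul_of_abs_sub_le (hY k j) (hδ k j)
  have hcoeff : η * (1 + η) ^ 2 + P * η * (1 + η) + P * η ≤ (1 + 2 * P) * (η * (1 + η) ^ 2) := by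
    nlinarith [mul_nonneg hP₀ hη, mul_nonneg (mul_nonneg hP₀ hη) hη,
      mul_nonneg (mul_nonneg (mul_nonneg hP₀ hη) hη) hη]
  calc _ = |(ℓ k - p k) * X i k * Y k j + p k * (X i k - if i = k then 1 else 0) * Y k j +
          p k * (if i = k then 1 else 0) * (Y k j - if k = j then 1 else 0)| := by
        congr 1; ring
    _ ≤ |ℓ k - p k| * |X i k| * |Y k j| + |p k| * |X i k - if i = k then 1 else 0| * |Y k j| +
          |p k| * |(if i = k then 1 else 0 : ℝ)| * |Y k j - if k = j then 1 else 0| :=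
        (abs_add_three _ _ _).trans_eq (by simp only [abs_mul])
    _ ≤ η * ((1 + η) * w i k) * ((1 + η) * w k j) + P * (η * w i k) * ((1 + η) * w k j) +
          P * w i k * (η * w k j) := by
        gcongr <;> first | exact hℓ k | exact hP k | exact hX i k | exact hY k j | exact hδ i k
    _ = (η * (1 + η) ^ 2 + P * η * (1 + η) + P * η) * (w i k * w k j) := by ring
    _ ≤ (1 + 2 * P) * (η * (1 + η) ^ 2) * w i j :=
        mul_le_mul hcoeff (hw i k j) (mul_nonneg (hw₀ i k) (hw₀ k j)) (by positivity)

theorem abs_sum_mul_mul_sub_kronecker_le [Fintype ι] (i j : ι) :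
    |∑ k, ℓ k * X i k * Y k j - p j * if i = j then 1 else 0| ≤
      Fintype.card ι * (1 + 2 * P) * (η * (1 + η) ^ 2) * w i j := by
  have hdiag : ∑ k, p k * (if i = k then 1 else 0) * (if k = j then 1 else 0) =
      p j * if i = j then 1 else 0 := by
    simp [mul_ite]
  calc _ = |∑ k, (ℓ k * X i k * Y k j -
          p k * (if i = k then 1 else 0) * (if k = j then 1 else 0))| := by
        rw [Finset.sum_sub_distrib, hdiag]
    _ ≤ ∑ k, |ℓ k * X i k * Y k j -
          p k * (if i = k then 1 else 0) * (if k = j then 1 else 0)| :=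
        Finset.abs_sum_le_sum_abs _ _
    _ ≤ ∑ _k : ι, (1 + 2 * P) * (η * (1 + η) ^ 2) * w i j :=
        Finset.sum_le_sum fun k _ =>
          abs_mul_mul_sub_kronecker_le hw₀ hw₁ hw hP hℓ hX hY i k j
    _ = _ := by rw [Finset.sum_const, Finset.card_univ, nsmul_eq_mul]; ring

end WeightedMatrix

theorem min_one_mul_min_one_le {x y : ℝ} (hx : 0 ≤ x) (hy : 0 ≤ y) :
    min 1 x * min 1 y ≤ min 1 (x * y) :=
  le_min (mul_le_one₀ (min_le_left _ _) (le_min zero_le_one hy) (min_le_left _ _))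
    (mul_le_mul (min_le_right _ _) (min_le_right _ _) (le_min zero_le_one hy) hx)

/-- The weight `m_{AB}(ρ)`. -/
noncomputable def kasnerWeight {ι : Type*} (p : ι → ℝ) (ρ : ℝ) (A B : ι) : ℝ :=
  min 1 (Real.exp (2 * (p B - p A) * ρ))

section KasnerWeight

variable {ι : Type*} (p : ι → ℝ) (ρ : ℝ)

theorem kasnerWeight_nonneg (A B : ι) : 0 ≤ kasnerWeight p ρ A B :=
  le_min zero_le_one (Real.exp_nonneg _)

theorem kasnerWeight_self (A : ι) : kasnerWeight p ρ A A = 1 := by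
  simp [kasnerWeight]

theorem kasnerWeight_mul_le (A D B : ι) :
    kasnerWeight p ρ A D * kasnerWeight p ρ D B ≤ kasnerWeight p ρ A B := by
  have hexp : Real.exp (2 * (p D - p A) * ρ) * Real.exp (2 * (p B - p D) * ρ) =
      Real.exp (2 * (p B - p A) * ρ) := by
    rw [← Real.exp_add]; ring_nf
  simpa only [kasnerWeight, hexp] using
    min_one_mul_min_one_le (Real.exp_nonneg (2 * (p D - p A) * ρ))
      (Real.exp_nonneg (2 * (p B - p D) * ρ))

end KasnerWeight

theorem one_le_jbr (x : ℝ) : 1 ≤ jbr x :=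
  Real.one_le_sqrt.mpr (le_add_of_nonneg_right (sq_nonneg x))

theorem mul_one_add_sq_le {C J e : ℝ} (hC : 0 ≤ C) (hJ : 1 ≤ J) (he₀ : 0 ≤ e) (he₁ : e ≤ 1) :
    C * J * e * (1 + C * J * e) ^ 2 ≤ C * (1 + C) ^ 2 * J ^ 3 * e := by
  have h : 1 + C * J * e ≤ (1 + C) * J := by
    nlinarith [mul_nonneg hC (zero_le_one.trans hJ)]
  calc C * J * e * (1 + C * J * e) ^ 2 ≤ C * J * e * ((1 + C) * J) ^ 2 := by gcongr
    _ = C * (1 + C) ^ 2 * J ^ 3 * e := by ring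

theorem weingarten_components_weighted_convergence_general
    (n : ℕ) (p : Fin n → ℝ)
    (a ε C : ℝ) (ha : 0 ≤ a) (hε : 0 < ε) (hC : 0 ≤ C) :
    ∃ C' a' : ℝ, 0 ≤ C' ∧ 0 ≤ a' ∧
      ∀ ρ ≤ (0 : ℝ), ∀ (ℓ : Fin n → ℝ) (X Y : Fin n → Fin n → ℝ),
        (∀ D, |ℓ D - p D| ≤ C * jbr ρ ^ a * Real.exp (2 * ε * ρ)) →
        (∀ A B, |X A B - (if A = B then 1 else 0)| ≤
          C * jbr ρ ^ a * Real.exp (2 * ε * ρ) *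
            min 1 (Real.exp (2 * (p B - p A) * ρ))) →
        (∀ A B, |Y A B - (if A = B then 1 else 0)| ≤
          C * jbr ρ ^ a * Real.exp (2 * ε * ρ) *
            min 1 (Real.exp (2 * (p B - p A) * ρ))) →
        ∀ A B,
          |(∑ D, ℓ D * X A D * Y D B) - p B * (if A = B then 1 else 0)| ≤
            C' * jbr ρ ^ a' * Real.exp (2 * ε * ρ) *
              min 1 (Real.exp (2 * (p B - p A) * ρ)) := by
  set P := ∑ i, |p i|
  have hP : ∀ i, |p i| ≤ P := fun i =>
    Finset.single_le_sum (fun j _ => abs_nonneg (p j)) (Finset.mem_univ i)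
  refine ⟨n * (1 + 2 * P) * (C * (1 + C) ^ 2), a * 3, by positivity, by positivity, ?_⟩
  intro ρ hρ ℓ X Y hℓ hX hY A B
  have hJ : 1 ≤ jbr ρ ^ a := Real.one_le_rpow (one_le_jbr ρ) ha
  have he : Real.exp (2 * ε * ρ) ≤ 1 := Real.exp_le_one_iff.mpr (by nlinarith)
  calc _ ≤ Fintype.card (Fin n) * (1 + 2 * P) * (C * jbr ρ ^ a * Real.exp (2 * ε * ρ) *
          (1 + C * jbr ρ ^ a * Real.exp (2 * ε * ρ)) ^ 2) * kasnerWeight p ρ A B :=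
        abs_sum_mul_mul_sub_kronecker_le (kasnerWeight_nonneg p ρ)
          (fun i => (kasnerWeight_self p ρ i).ge) (kasnerWeight_mul_le p ρ) hP hℓ hX hY A B
    _ ≤ n * (1 + 2 * P) * (C * (1 + C) ^ 2 * (jbr ρ ^ a) ^ 3 * Real.exp (2 * ε * ρ)) *
          kasnerWeight p ρ A B := by
        rw [Fintype.card_fin]
        exact mul_le_mul_of_nonneg_right
          (mul_le_mul_of_nonneg_left (mul_one_add_sq_le hC hJ (Real.exp_nonneg _) he)
            (by positivity))
          (kasnerWeight_nonneg p ρ A B)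
    _ = _ := by
        rw [← Real.rpow_mul_natCast (zero_le_one.trans (one_le_jbr ρ)), Nat.cast_ofNat]
        simp only [kasnerWeight]
        ring

/-- Weighted convergence of the components of the expansion
normalised Weingarten map.  With weights `m_{AB}(ρ) = min{1, e^{2(p_B − p_A)ρ}}`,
if `|ℓ_C − p_C| ≤ C ⟨ρ⟩^a e^{2ερ}` and the matrices `X`, `Y` satisfy
`|X_{AB} − δ_{AB}|, |Y_{AB} − δ_{AB}| ≤ C ⟨ρ⟩^a e^{2ερ} m_{AB}(ρ)`, then
`𝒦_{AB} := ∑_C ℓ_C X_{AC} Y_{CB}` satisfies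
`|𝒦_{AB} − p_B δ_{AB}| ≤ C′ ⟨ρ⟩^{a′} e^{2ερ} m_{AB}(ρ)`. -/
theorem weingarten_components_weighted_convergence
    (n : ℕ) (hn : 1 ≤ n) (p : Fin n → ℝ) (hp : StrictMono p)
    (a ε C : ℝ) (ha : 0 ≤ a) (hε : 0 < ε) (hC : 0 ≤ C) :
    ∃ C' a' : ℝ, 0 ≤ C' ∧ 0 ≤ a' ∧
      ∀ ρ ≤ (0 : ℝ), ∀ (ℓ : Fin n → ℝ) (X Y : Fin n → Fin n → ℝ),
        (∀ D, |ℓ D - p D| ≤ C * jbr ρ ^ a * Real.exp (2 * ε * ρ)) →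
        (∀ A B, |X A B - (if A = B then 1 else 0)| ≤
          C * jbr ρ ^ a * Real.exp (2 * ε * ρ) *
            min 1 (Real.exp (2 * (p B - p A) * ρ))) →
        (∀ A B, |Y A B - (if A = B then 1 else 0)| ≤
          C * jbr ρ ^ a * Real.exp (2 * ε * ρ) *
            min 1 (Real.exp (2 * (p B - p A) * ρ))) →
        ∀ A B,
          |(∑ D, ℓ D * X A D * Y D B) - p B * (if A = B then 1 else 0)| ≤
            C' * jbr ρ ^ a' * Real.exp (2 * ε * ρ) *
              min 1 (Real.exp (2 * (p B - p A) * ρ)) :=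
  weingarten_components_weighted_convergence_general n p a ε C ha hε hC
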